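/- arXiv:math/0209329 — 2 statements merged into one kernel-verified Lean document; each statement's English description precedes it below -/
import Mathlib

section
/- Let dμ be a measure on ℂ with finite moments and infinite support, let p_n(z) be the associated orthonormal polynomials, and let K_n(z,w) = Σ_{j=0}^n p_j(z)·conj(p_j(w)) be the reproducing kernel. If z₀ ∈ ℂ and w is a zero of p_j for some j ≤ n+1, then |z₀ − w| ≥ (|p_j(z₀)| / K_n(z₀,z₀)^{1/2}) · dist(w, supp(dμ)). -/
open MeasureTheory Polynomial Finset ComplexConjugate

/-!
Write `p_j = (z - w) q` with `deg q ≤ n`. Almost every point of `μ` lies in its support, where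
`|z - w| ≥ d := dist(w, supp μ)`, so `d² ‖q‖² ≤ ‖p_j‖² = 1` in `L²(μ)`. Expanding `q` in the
orthonormal basis `p_0, …, p_n` and applying Cauchy–Schwarz gives `|q(z₀)|² ≤ K_n(z₀,z₀) ‖q‖²`.
Hence `(|p_j(z₀)| d)² = |z₀ - w|² |q(z₀)|² d² ≤ |z₀ - w|² K_n(z₀,z₀)`.
-/

/-- The (topological) support of a measure on a metric space: points all of whose
neighborhoods have positive measure. -/
def measSupport (μ : Measure ℂ) : Set ℂ :=
  {z | ∀ ε > 0, 0 < μ (Metric.ball z ε)}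

lemma norm_sum_mul_sq_le {ι R : Type*} [SeminormedRing R] (s : Finset ι) (a b : ι → R) :
    ‖∑ k ∈ s, a k * b k‖ ^ 2 ≤ (∑ k ∈ s, ‖a k‖ ^ 2) * ∑ k ∈ s, ‖b k‖ ^ 2 := by
  calc ‖∑ k ∈ s, a k * b k‖ ^ 2 ≤ (∑ k ∈ s, ‖a k‖ * ‖b k‖) ^ 2 := by
        gcongr
        exact (norm_sum_le _ _).trans (sum_le_sum fun k _ => norm_mul_le _ _)
    _ ≤ _ := sum_mul_sq_le_sq_mul_sq _ _ _

lemma Polynomial.exists_eq_sum_smul_of_natDegree_le {K : Type*} [Field K] {p : ℕ → K[X]}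
    (hdeg : ∀ k, (p k).natDegree = k) (hp : ∀ k, p k ≠ 0) {q : K[X]} {n : ℕ}
    (hq : q.natDegree ≤ n) : ∃ c : ℕ → K, q = ∑ k ∈ range (n + 1), c k • p k := by
  let S : Sequence K := ⟨p, fun k => by rw [degree_eq_natDegree (hp k), hdeg]⟩
  have hmem : q ∈ Submodule.span K (p '' Set.Iic n) := by
    rw [S.span_degreeLE fun k _ => (leadingCoeff_ne_zero.2 (hp k)).isUnit]
    exact mem_degreeLE.2 (degree_le_of_natDegree_le hq)
  obtain ⟨l, hl, rfl⟩ := (Finsupp.mem_span_image_iff_linearCombination K).1 hmem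
  refine ⟨l, ?_⟩
  rw [Finsupp.linearCombination_apply, Finsupp.sum_of_support_subset l (s := range (n + 1))]
  · intro k hk
    simpa [Nat.lt_succ_iff] using hl hk
  · simp

section Orthonormal

variable {α : Type*} [MeasurableSpace α] {μ : Measure α}

lemma integral_mul_conj_eq_integral_norm_sq (g : α → ℂ) :
    ∫ x, g x * conj (g x) ∂μ = ↑(∫ x, ‖g x‖ ^ 2 ∂μ) := by
  simp_rw [Complex.mul_conj', ← Complex.ofReal_pow]
  exact integral_complex_ofReal

-- The Bochner integral of a non-integrable function is `0`, so a nonzero one certifies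
-- integrability.
lemma memLp_two_of_integral_mul_conj_ne_zero {g : α → ℂ} (hg : AEStronglyMeasurable g μ)
    (h : ∫ x, g x * conj (g x) ∂μ ≠ 0) : MemLp g 2 μ := by
  rw [integral_mul_conj_eq_integral_norm_sq, Complex.ofReal_ne_zero] at h
  exact (memLp_two_iff_integrable_sq_norm hg).2 (Integrable.of_integral_ne_zero h)

lemma integral_norm_sum_sq_of_orthonormal {f : ℕ → α → ℂ}
    (hf : ∀ k, AEStronglyMeasurable (f k) μ)
    (horth : ∀ k l, ∫ x, f k x * conj (f l x) ∂μ = if k = l then 1 else 0)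
    (s : Finset ℕ) (c : ℕ → ℂ) :
    ∫ x, ‖∑ k ∈ s, c k * f k x‖ ^ 2 ∂μ = ∑ k ∈ s, ‖c k‖ ^ 2 := by
  have hL2 (k : ℕ) : MemLp (f k) 2 μ :=
    memLp_two_of_integral_mul_conj_ne_zero (hf k) (by simp [horth])
  have hint (k l : ℕ) :
      Integrable (fun x => c k * conj (c l) * (f k x * conj (f l x))) μ :=
    ((hL2 k).integrable_mul (hL2 l).star).const_mul _
  apply Complex.ofReal_injective
  rw [← integral_mul_conj_eq_integral_norm_sq]
  calc ∫ x, (∑ k ∈ s, c k * f k x) * conj (∑ k ∈ s, c k * f k x) ∂μ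
      = ∫ x, ∑ k ∈ s, ∑ l ∈ s, c k * conj (c l) * (f k x * conj (f l x)) ∂μ := by
        congr with x
        simp_rw [map_sum, sum_mul_sum, map_mul]
        exact sum_congr rfl fun k _ => sum_congr rfl fun l _ => by ring
    _ = ∑ k ∈ s, ∑ l ∈ s, c k * conj (c l) * (if k = l then 1 else 0) := by
        rw [integral_finsetSum _ fun k _ => integrable_finsetSum _ fun l _ => hint k l]
        refine sum_congr rfl fun k _ => ?_
        rw [integral_finsetSum _ fun l _ => hint k l]
        simp_rw [integral_const_mul, horth]
    _ = ↑(∑ k ∈ s, ‖c k‖ ^ 2) := by simp [Complex.mul_conj']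

end Orthonormal

lemma norm_eval_sq_le_sum_norm_eval_sq_mul_integral {μ : Measure ℂ} {p : ℕ → ℂ[X]}
    (hdeg : ∀ k, (p k).natDegree = k)
    (horth : ∀ k l, ∫ z, (p k).eval z * conj ((p l).eval z) ∂μ = if k = l then 1 else 0)
    {n : ℕ} {q : ℂ[X]} (hq : q.natDegree ≤ n) (z₀ : ℂ) :
    ‖q.eval z₀‖ ^ 2 ≤
      (∑ k ∈ range (n + 1), ‖(p k).eval z₀‖ ^ 2) * ∫ z, ‖q.eval z‖ ^ 2 ∂μ := by
  have hp (k : ℕ) : p k ≠ 0 := fun h => by simpa [h] using horth k k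
  obtain ⟨c, rfl⟩ := exists_eq_sum_smul_of_natDegree_le hdeg hp hq
  simp only [eval_finsetSum, eval_smul, smul_eq_mul]
  rw [integral_norm_sum_sq_of_orthonormal (fun k => (p k).continuous.aestronglyMeasurable) horth,
    mul_comm]
  exact norm_sum_mul_sq_le _ _ _

lemma ae_mem_measSupport (μ : Measure ℂ) : ∀ᵐ z ∂μ, z ∈ measSupport μ := by
  have hsupp : measSupport μ = μ.support :=
    Set.ext fun _ => Metric.nhds_basis_ball.mem_measureSupport.symm
  exact hsupp ▸ Measure.support_mem_ae

lemma infDist_measSupport_sq_mul_integral_le {μ : Measure ℂ} {f g : ℂ → ℂ} {w : ℂ}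
    (hfg : ∀ z, f z = (z - w) * g z) (hf : Integrable (fun z => ‖f z‖ ^ 2) μ) :
    Metric.infDist w (measSupport μ) ^ 2 * ∫ z, ‖g z‖ ^ 2 ∂μ ≤ ∫ z, ‖f z‖ ^ 2 ∂μ := by
  rw [← integral_const_mul]
  refine integral_mono_of_nonneg (.of_forall fun z => by positivity) hf ?_
  filter_upwards [ae_mem_measSupport μ] with z hz
  have hd : Metric.infDist w (measSupport μ) ≤ ‖z - w‖ := by
    simpa [Complex.dist_eq, norm_sub_rev] using Metric.infDist_le_dist_of_mem (x := w) hz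
  rw [hfg, norm_mul, mul_pow]
  gcongr
  exact Metric.infDist_nonneg

theorem stmt_0_general (μ : Measure ℂ)
    (p : ℕ → Polynomial ℂ)
    (hdeg : ∀ n, (p n).natDegree = n)
    (horth : ∀ n m, ∫ z, (p n).eval z * (starRingEnd ℂ) ((p m).eval z) ∂μ
      = if n = m then 1 else 0)
    (n j : ℕ) (hj : j ≤ n + 1) (z₀ w : ℂ) (hw : (p j).eval w = 0) :
    dist z₀ w ≥
      (‖(p j).eval z₀‖ /
        Real.sqrt (∑ k ∈ Finset.range (n + 1), ‖(p k).eval z₀‖ ^ 2)) *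
      Metric.infDist w (measSupport μ) := by
  set d := Metric.infDist w (measSupport μ)
  set K := ∑ k ∈ range (n + 1), ‖(p k).eval z₀‖ ^ 2
  set q := p j /ₘ (X - C w)
  have hfac (z : ℂ) : (p j).eval z = (z - w) * q.eval z := by
    rw [← mul_divByMonic_eq_iff_isRoot.2 hw, eval_mul, eval_sub, eval_X, eval_C]
  have hq : q.natDegree ≤ n := by
    rw [natDegree_divByMonic _ (monic_X_sub_C w), hdeg, natDegree_X_sub_C]
    omega
  have hnorm : ∫ z, ‖(p j).eval z‖ ^ 2 ∂μ = 1 := by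
    have h := horth j j
    rwa [if_pos rfl, integral_mul_conj_eq_integral_norm_sq, Complex.ofReal_eq_one] at h
  have hsupp : d ^ 2 * ∫ z, ‖q.eval z‖ ^ 2 ∂μ ≤ 1 := by
    have hint : Integrable (fun z => ‖(p j).eval z‖ ^ 2) μ :=
      .of_integral_ne_zero (by rw [hnorm]; exact one_ne_zero)
    exact hnorm ▸ infDist_measSupport_sq_mul_integral_le hfac hint
  have hkernel := norm_eval_sq_le_sum_norm_eval_sq_mul_integral hdeg horth hq z₀
  rw [ge_iff_le, div_mul_eq_mul_div]
  refine div_le_of_le_mul₀ (Real.sqrt_nonneg _) dist_nonneg ?_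
  rw [← pow_le_pow_iff_left₀ (mul_nonneg (norm_nonneg _) Metric.infDist_nonneg) (by positivity)
    two_ne_zero]
  calc (‖(p j).eval z₀‖ * d) ^ 2 = dist z₀ w ^ 2 * (d ^ 2 * ‖q.eval z₀‖ ^ 2) := by
        rw [hfac, norm_mul, ← Complex.dist_eq]
        ring
    _ ≤ dist z₀ w ^ 2 * (d ^ 2 * (K * ∫ z, ‖q.eval z‖ ^ 2 ∂μ)) := by gcongr
    _ = dist z₀ w ^ 2 * K * (d ^ 2 * ∫ z, ‖q.eval z‖ ^ 2 ∂μ) := by ring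
    _ ≤ dist z₀ w ^ 2 * K := mul_le_of_le_one_right (by positivity) hsupp
    _ = (dist z₀ w * Real.sqrt K) ^ 2 := by rw [mul_pow, Real.sq_sqrt (by positivity)]

/-- Lemma 2.1: if `w` is a zero of `p j` for some `j ≤ n+1`, then
`|z₀ - w| ≥ |p_j(z₀)| / K_n(z₀,z₀)^{1/2} · dist(w, supp μ)`. -/
theorem stmt_0 (μ : Measure ℂ)
    (hmom : ∀ n : ℕ, Integrable (fun z : ℂ => ‖z‖ ^ n) μ)
    (hinf : (measSupport μ).Infinite)
    (p : ℕ → Polynomial ℂ)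
    (hdeg : ∀ n, (p n).natDegree = n)
    (hlead : ∀ n, ∃ c : ℝ, 0 < c ∧ (p n).leadingCoeff = (c : ℂ))
    (horth : ∀ n m, ∫ z, (p n).eval z * (starRingEnd ℂ) ((p m).eval z) ∂μ
      = if n = m then 1 else 0)
    (n j : ℕ) (hj : j ≤ n + 1) (z₀ w : ℂ) (hw : (p j).eval w = 0) :
    dist z₀ w ≥
      (‖(p j).eval z₀‖ /
        Real.sqrt (∑ k ∈ Finset.range (n + 1), ‖(p k).eval z₀‖ ^ 2)) *
      Metric.infDist w (measSupport μ) :=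
  stmt_0_general μ p hdeg horth n j hj z₀ w hw
end

section
/- Let A be a self-adjoint operator on a finite-dimensional inner product space, β ∈ ℝ, and ψ ≠ 0 a vector with ‖(A − β)ψ‖ ≤ ε‖ψ‖. Then A has an eigenvalue λ with |λ − β| ≤ ε. Applied to the truncated Jacobi matrix L_{j;F} of the paper's example with j = 2(n+1)² − 1, trial vector ψ = (p_0^{(0)}(0), …, p_{j−1}^{(0)}(0)), and β = β_n: since ‖(L_{j;F} − β_n)ψ‖²/‖ψ‖² ≤ 4·Σ_{k=0}^{n²−1} 3^{2k} / Σ_{k=0}^{(n+1)²−1} 3^{2k} ≤ 4·3^{−4n}, L_{j;F} has an eigenvalue within 2·3^{−2n} of β_n. -/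
/-!
Expanding a nonzero vector `v` in an orthonormal eigenbasis of a self-adjoint `T` gives
`‖(T - μ) v‖² = ∑ |λᵢ - μ|² |cᵢ|² ≥ (minᵢ |λᵢ - μ|)² ‖v‖²`, so some eigenvalue lies within `ε` of
`μ` as soon as `‖(T - μ) v‖ ≤ ε ‖v‖`.

For the truncated Jacobi matrix the trial vector `ψₖ = p⁽⁰⁾ₖ(0)` is annihilated by the
off-diagonal part (the recurrence `3 p⁽⁰⁾₂ₘ(0) + p⁽⁰⁾₂ₘ₊₂(0) = 0`, and the truncation size is odd),
so `(L - βₙ) ψ` is the diagonal vector `(bₖ - βₙ) ψₖ`. It vanishes on the last block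
`2n² ≤ k`, where `bₖ = βₙ`, and elsewhere `|bₖ - βₙ| < 2` and `ψₖ² ≤ 3ᵏ`, so
`‖(L - βₙ) ψ‖² ≤ 4 ∑_{k < 2n²} 3ᵏ ≤ 2 · 3^{2n²}`, while the last entry alone gives
`‖ψ‖² ≥ 3^{2n² + 4n}`.
-/

open Polynomial Matrix

namespace LinearMap.IsSymmetric

variable {𝕜 E : Type*} [RCLike 𝕜] [NormedAddCommGroup E] [InnerProductSpace 𝕜 E]
  [FiniteDimensional 𝕜 E] {T : E →ₗ[𝕜] E} {n : ℕ}

theorem mul_norm_le_norm_sub_smul (hT : T.IsSymmetric) (hn : Module.finrank 𝕜 E = n)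
    (v : E) {μ δ : ℝ} (hδ : 0 ≤ δ) (h : ∀ i, δ ≤ |hT.eigenvalues hn i - μ|) :
    δ * ‖v‖ ≤ ‖T v - (μ : 𝕜) • v‖ := by
  set b := hT.eigenvectorBasis hn
  have hcoord : ∀ i, b.repr (T v - (μ : 𝕜) • v) i = (hT.eigenvalues hn i - μ : 𝕜) * b.repr v i := by
    intro i
    simp only [map_sub, map_smul, PiLp.sub_apply, PiLp.smul_apply, smul_eq_mul,
      b, hT.eigenvectorBasis_apply_self_apply]
    ring
  refine le_of_pow_le_pow_left₀ two_ne_zero (norm_nonneg _) ?_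
  rw [mul_pow, ← b.repr.norm_map, ← b.repr.norm_map, EuclideanSpace.norm_sq_eq,
    EuclideanSpace.norm_sq_eq, Finset.mul_sum]
  refine Finset.sum_le_sum fun i _ => ?_
  rw [hcoord, norm_mul, mul_pow, ← RCLike.ofReal_sub, RCLike.norm_ofReal]
  gcongr
  exact h i

theorem exists_abs_eigenvalues_sub_le (hT : T.IsSymmetric) (hn : Module.finrank 𝕜 E = n)
    {v : E} (hv : v ≠ 0) {μ ε : ℝ} (h : ‖T v - (μ : 𝕜) • v‖ ≤ ε * ‖v‖) :
    ∃ i, |hT.eigenvalues hn i - μ| ≤ ε := by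
  have : Nontrivial E := nontrivial_of_ne v 0 hv
  have : Nonempty (Fin n) := ⟨⟨0, hn ▸ Module.finrank_pos⟩⟩
  obtain ⟨i, -, hi⟩ := Finset.univ.exists_min_image (fun i => |hT.eigenvalues hn i - μ|)
    Finset.univ_nonempty
  refine ⟨i, le_of_mul_le_mul_right ?_ (norm_pos_iff.mpr hv)⟩
  exact (hT.mul_norm_le_norm_sub_smul hn v (abs_nonneg _) fun j => hi j (Finset.mem_univ j)).trans h

end LinearMap.IsSymmetric

theorem Matrix.IsHermitian.exists_isRoot_charpoly_abs_sub_le {𝕜 ι : Type*} [RCLike 𝕜]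
    [Fintype ι] [DecidableEq ι] {A : Matrix ι ι 𝕜} (hA : A.IsHermitian)
    {v : EuclideanSpace 𝕜 ι} (hv : v ≠ 0) {μ ε : ℝ}
    (h : ‖toEuclideanLin A v - (μ : 𝕜) • v‖ ≤ ε * ‖v‖) :
    ∃ lam : ℝ, A.charpoly.IsRoot (lam : 𝕜) ∧ |lam - μ| ≤ ε := by
  have hT := isSymmetric_toEuclideanLin_iff.mpr hA
  obtain ⟨i, hi⟩ := hT.exists_abs_eigenvalues_sub_le finrank_euclideanSpace hv h
  refine ⟨_, ?_, hi⟩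
  rw [← mem_spectrum_iff_isRoot_charpoly, ← spectrum_toLpLin 2]
  exact (hT.hasEigenvalue_eigenvalues _ i).mem_spectrum

theorem Matrix.IsSymm.exists_isRoot_charpoly_abs_sub_le {ι : Type*} [Fintype ι] [DecidableEq ι]
    {A : Matrix ι ι ℝ} (hA : A.IsSymm) {μ ε : ℝ} {ψ : ι → ℝ} (hψ : ψ ≠ 0)
    (h : Real.sqrt (∑ i, (A.mulVec ψ i - μ * ψ i) ^ 2) ≤ ε * Real.sqrt (∑ i, ψ i ^ 2)) :
    ∃ lam : ℝ, A.charpoly.IsRoot lam ∧ |lam - μ| ≤ ε := by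
  have hA' : A.IsHermitian := by
    rwa [IsHermitian, conjTranspose_eq_transpose_of_trivial]
  refine hA'.exists_isRoot_charpoly_abs_sub_le (v := WithLp.toLp 2 ψ) (by simpa using hψ) ?_
  simpa [EuclideanSpace.norm_eq] using h

/-- `p⁽⁰⁾ₖ(0)`, for the Jacobi matrix with zero diagonal and off-diagonal entries `3, 1, 3, 1, …`. -/
def zeroDiagOrthoPolyAtZero (k : ℕ) : ℝ :=
  if Even k then (-3) ^ (k / 2) else 0

theorem zeroDiagOrthoPolyAtZero_sq_of_even {k : ℕ} (hk : Even k) :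
    zeroDiagOrthoPolyAtZero k ^ 2 = 3 ^ k := by
  obtain ⟨m, rfl⟩ := hk
  rw [zeroDiagOrthoPolyAtZero, if_pos ⟨m, rfl⟩, ← two_mul, Nat.mul_div_cancel_left _ two_pos,
    ← pow_mul, mul_comm, pow_mul, pow_mul, neg_sq]

theorem zeroDiagOrthoPolyAtZero_sq_le (k : ℕ) : zeroDiagOrthoPolyAtZero k ^ 2 ≤ 3 ^ k := by
  by_cases hk : Even k
  · exact (zeroDiagOrthoPolyAtZero_sq_of_even hk).le
  · simp [zeroDiagOrthoPolyAtZero, hk]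

theorem three_mul_zeroDiagOrthoPolyAtZero_add (m : ℕ) :
    3 * zeroDiagOrthoPolyAtZero (2 * m) + zeroDiagOrthoPolyAtZero (2 * m + 2) = 0 := by
  have h : 2 * m + 2 = 2 * (m + 1) := by ring
  simp only [zeroDiagOrthoPolyAtZero, even_two_mul, h, if_true,
    Nat.mul_div_cancel_left _ two_pos, pow_succ]
  ring

section Jacobi

variable {N : ℕ} {M : Matrix (Fin N) (Fin N) ℝ}

theorem mul_zeroDiagOrthoPolyAtZero_eq_zero
    (hMtri : ∀ i j : Fin N, 1 < |(i : ℤ) - (j : ℤ)| → M i j = 0) {i j : Fin N}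
    (hij : Odd (j : ℕ) ∨ 1 < |(i : ℤ) - (j : ℤ)|) :
    M i j * zeroDiagOrthoPolyAtZero j = 0 := by
  rcases hij with hj | hij
  · simp [zeroDiagOrthoPolyAtZero, Nat.not_even_iff_odd.mpr hj]
  · rw [hMtri i j hij, zero_mul]

theorem mulVec_zeroDiagOrthoPolyAtZero (hN : Odd N) (hMsym : M.IsSymm)
    (hMoff : ∀ i j : Fin N, (i : ℕ) + 1 = (j : ℕ) →
      M i j = (if Odd ((i : ℕ) + 1) then (3 : ℝ) else 1))
    (hMtri : ∀ i j : Fin N, 1 < |(i : ℤ) - (j : ℤ)| → M i j = 0) (i : Fin N) :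
    (M *ᵥ fun j => zeroDiagOrthoPolyAtZero j) i = M i i * zeroDiagOrthoPolyAtZero i := by
  rw [mulVec, dotProduct]
  rcases Nat.even_or_odd (i : ℕ) with hi | hi
  · refine Finset.sum_eq_single i (fun j _ hji => ?_) (by simp)
    apply mul_zeroDiagOrthoPolyAtZero_eq_zero hMtri
    rw [lt_abs, ← Nat.not_even_iff_odd]
    have := Fin.val_ne_of_ne hji
    grind
  · obtain ⟨m, hm⟩ := hi
    have hlt : 2 * m + 2 < N := by
      obtain ⟨r, rfl⟩ := hN
      omega
    let a : Fin N := ⟨2 * m, by omega⟩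
    let b : Fin N := ⟨2 * m + 2, hlt⟩
    have hab : a ≠ b := by simp [a, b, Fin.ext_iff]
    rw [Finset.sum_eq_add a b hab (fun j _ hj => ?_) (by simp) (by simp)]
    · have hia : M i a = 3 := by
        rw [← hMsym.apply, hMoff a i (by simp [a, hm])]
        simp [a]
      have hib : M i b = 1 := by
        rw [hMoff i b (by simp [b, hm]), hm]
        simp [Nat.odd_add_one, parity_simps]
      have hpi : zeroDiagOrthoPolyAtZero i = 0 := by
        simp [zeroDiagOrthoPolyAtZero, hm, parity_simps]
      rw [hia, hib, hpi, mul_zero, one_mul]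
      exact three_mul_zeroDiagOrthoPolyAtZero_add m
    · apply mul_zeroDiagOrthoPolyAtZero_eq_zero hMtri
      rw [lt_abs, ← Nat.not_even_iff_odd]
      simp only [a, b, ne_eq, Fin.ext_iff] at hj
      grind

end Jacobi

theorem pow_three_le_sum_sq_zeroDiagOrthoPolyAtZero {N : ℕ} (hN : Odd N) :
    (3 : ℝ) ^ (N - 1) ≤ ∑ k ∈ Finset.range N, zeroDiagOrthoPolyAtZero k ^ 2 := by
  have hlast : N - 1 ∈ Finset.range N := by
    obtain ⟨r, rfl⟩ := hN
    simp
  rw [← zeroDiagOrthoPolyAtZero_sq_of_even (Nat.Odd.sub_odd hN odd_one)]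
  exact Finset.single_le_sum (fun k _ => sq_nonneg _) hlast

theorem Nat.sqrt_succ_div_two_eq {n k : ℕ} (h₁ : 2 * n ^ 2 ≤ k) (h₂ : k < 2 * (n + 1) ^ 2 - 1) :
    Nat.sqrt ((k + 1) / 2) = n := by
  rw [eq_comm, Nat.eq_sqrt']
  constructor <;> ring_nf at * <;> omega

theorem sum_sq_diag_residual_le (n : ℕ) (β : ℕ → ℝ) (hβ : ∀ m, |β m| < 1) :
    ∑ k ∈ Finset.range (2 * (n + 1) ^ 2 - 1),
        ((β (Nat.sqrt ((k + 1) / 2)) - β n) * zeroDiagOrthoPolyAtZero k) ^ 2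
      ≤ 2 * 3 ^ (2 * n ^ 2) := by
  have hle : 2 * n ^ 2 ≤ 2 * (n + 1) ^ 2 - 1 := by
    have : n ^ 2 < (n + 1) ^ 2 := Nat.pow_lt_pow_left (Nat.lt_succ_self n) two_ne_zero
    omega
  rw [← Finset.sum_range_add_sum_Ico _ hle]
  have htail : ∀ k ∈ Finset.Ico (2 * n ^ 2) (2 * (n + 1) ^ 2 - 1),
      ((β (Nat.sqrt ((k + 1) / 2)) - β n) * zeroDiagOrthoPolyAtZero k) ^ 2 = 0 := by
    intro k hk
    rw [Finset.mem_Ico] at hk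
    rw [Nat.sqrt_succ_div_two_eq hk.1 hk.2, sub_self, zero_mul, sq, zero_mul]
  have hterm : ∀ k, ((β (Nat.sqrt ((k + 1) / 2)) - β n) * zeroDiagOrthoPolyAtZero k) ^ 2
      ≤ 4 * 3 ^ k := by
    intro k
    have hdiff : (β (Nat.sqrt ((k + 1) / 2)) - β n) ^ 2 ≤ 4 := by
      have : |β (Nat.sqrt ((k + 1) / 2)) - β n| ≤ 2 := by
        linarith [abs_sub (β (Nat.sqrt ((k + 1) / 2))) (β n), hβ (Nat.sqrt ((k + 1) / 2)), hβ n]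
      rw [← sq_abs]
      nlinarith [abs_nonneg (β (Nat.sqrt ((k + 1) / 2)) - β n)]
    rw [mul_pow]
    exact mul_le_mul hdiff (zeroDiagOrthoPolyAtZero_sq_le k) (sq_nonneg _) (by norm_num)
  rw [Finset.sum_eq_zero htail, add_zero]
  calc _ ≤ ∑ k ∈ Finset.range (2 * n ^ 2), 4 * (3 : ℝ) ^ k := Finset.sum_le_sum fun k _ => hterm k
    _ = 2 * (3 ^ (2 * n ^ 2) - 1) := by
      rw [← Finset.mul_sum, geom_sum_eq (by norm_num : (3 : ℝ) ≠ 1)]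
      ring
    _ ≤ 2 * 3 ^ (2 * n ^ 2) := by linarith

/-- (i) A self-adjoint matrix with an `ε`-approximate eigenvector at `β` has an
eigenvalue within `ε` of `β`; (ii) applied to the truncated Jacobi matrix
`L_{j;F}` with `j = 2(n+1)² − 1` and trial vector `(p_0⁰(0), …, p_{j−1}⁰(0))`,
`L_{j;F}` has an eigenvalue within `2·3^{−2n}` of `β_n`. -/
theorem stmt_17 (n : ℕ) (β : ℕ → ℝ) (hβ : ∀ m, |β m| < 1)
    (M : Matrix (Fin (2 * (n + 1) ^ 2 - 1)) (Fin (2 * (n + 1) ^ 2 - 1)) ℝ)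
    (hMsym : M.IsSymm)
    (hMdiag : ∀ i, M i i = β (Nat.sqrt (((i : ℕ) + 1) / 2)))
    (hMoff : ∀ i j : Fin (2 * (n + 1) ^ 2 - 1), (i : ℕ) + 1 = (j : ℕ) →
      M i j = (if Odd ((i : ℕ) + 1) then (3 : ℝ) else 1))
    (hMtri : ∀ i j : Fin (2 * (n + 1) ^ 2 - 1), 1 < |(i : ℤ) - (j : ℤ)| → M i j = 0) :
    (∀ (m : ℕ) (A : Matrix (Fin m) (Fin m) ℝ), A.IsSymm →
      ∀ (μ ε : ℝ) (ψ : Fin m → ℝ), ψ ≠ 0 →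
        Real.sqrt (∑ i, (A.mulVec ψ i - μ * ψ i) ^ 2)
          ≤ ε * Real.sqrt (∑ i, ψ i ^ 2) →
        ∃ lam : ℝ, A.charpoly.IsRoot lam ∧ |lam - μ| ≤ ε) ∧
    (∃ lam : ℝ, M.charpoly.IsRoot lam ∧ |lam - β n| ≤ 2 / 3 ^ (2 * n)) := by
  refine ⟨fun m A hA μ ε ψ hψ h => hA.exists_isRoot_charpoly_abs_sub_le hψ h, ?_⟩
  have hN : Odd (2 * (n + 1) ^ 2 - 1) :=
    Nat.Even.sub_odd (Nat.one_le_iff_ne_zero.mpr (by positivity)) (even_two_mul _) odd_one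
  set ψ : Fin (2 * (n + 1) ^ 2 - 1) → ℝ := fun i => zeroDiagOrthoPolyAtZero i
  have hψ : ψ ≠ 0 := fun h => by simpa [ψ, zeroDiagOrthoPolyAtZero] using congrFun h ⟨0, hN.pos⟩
  have hresidual : ∑ i, ((M *ᵥ ψ) i - β n * ψ i) ^ 2 = ∑ k ∈ Finset.range (2 * (n + 1) ^ 2 - 1),
      ((β (Nat.sqrt ((k + 1) / 2)) - β n) * zeroDiagOrthoPolyAtZero k) ^ 2 := by
    rw [← Fin.sum_univ_eq_sum_range]
    refine Finset.sum_congr rfl fun i _ => ?_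
    rw [mulVec_zeroDiagOrthoPolyAtZero hN hMsym hMoff hMtri, hMdiag]
    ring
  have hnorm : (3 : ℝ) ^ (2 * n ^ 2 + 4 * n) ≤ ∑ i, ψ i ^ 2 := by
    rw [Fin.sum_univ_eq_sum_range (fun k => zeroDiagOrthoPolyAtZero k ^ 2)]
    convert pow_three_le_sum_sq_zeroDiagOrthoPolyAtZero hN using 2
    ring_nf
    omega
  have hε : (0 : ℝ) ≤ 2 / 3 ^ (2 * n) := by positivity
  have hsq : ∑ i, ((M *ᵥ ψ) i - β n * ψ i) ^ 2 ≤ (2 / 3 ^ (2 * n)) ^ 2 * ∑ i, ψ i ^ 2 :=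
    calc _ ≤ 2 * (3 : ℝ) ^ (2 * n ^ 2) := hresidual ▸ sum_sq_diag_residual_le n β hβ
      _ ≤ (2 / 3 ^ (2 * n)) ^ 2 * 3 ^ (2 * n ^ 2 + 4 * n) := by
        rw [div_pow, pow_add, ← pow_mul, show 2 * n * 2 = 4 * n by ring]
        field_simp
        nlinarith [pow_pos (by norm_num : (0 : ℝ) < 3) (2 * n ^ 2)]
      _ ≤ _ := by gcongr
  refine hMsym.exists_isRoot_charpoly_abs_sub_le hψ ?_
  rw [← Real.sqrt_sq hε, ← Real.sqrt_mul (sq_nonneg _)]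
  exact Real.sqrt_le_sqrt hsq
end
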